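/- Let p be a prime, A a reduced commutative ring with p·1_A = 0, n ≥ 1, t ≥ 1, and X ∈ Σ_{1,t} ⊆ M_n(W(A)). Let d ≥ 0 and v ≥ 1 be integers with v ≥ t·d, and let Z ∈ M_n(W(A)) be the unique matrix with v!·Z = X^v. Then Z lies entrywise in V^{d+1}, i.e. coeff_j of every entry of Z vanishes for all j ≤ d. -/

import Mathlib

/-!
Since `π₀ X = 0` we can write `X = V Y` entrywise, and `V x · V y = p · V (x y)` gives
`X ^ v = p ^ (v - 1) · V (Y ^ v)`. As `π₀ Y = π₁ X`, the matrix `Y ^ t` lies entrywise in `V`;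
in characteristic `p` the filtration is multiplicative (`V^a · V^b ⊆ V^(a+b)`), so
`Y ^ v = Y ^ (v - t d) (Y ^ t) ^ d` lies in `V^d` and `v! Z = X ^ v` lies in `V^(v+d)`.
Write `v! = p ^ a m` with `p ∤ m` and `a < v` (Legendre). Multiplication by `p ^ a` shifts the
Witt coordinates by `a` and raises them to the power `p ^ a`, so reducedness gives
`m Z ∈ V^(v+d-a) ⊆ V^(d+1)`; finally `m` acts injectively modulo `V^(d+1)` because its zeroth
coordinate is a unit of `A`.
-/

/-- The matrix of `j`-th Witt coordinates of a matrix of Witt vectors. -/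
def wittPi (p : ℕ) {A : Type*} {n : ℕ} (j : ℕ)
    (X : Matrix (Fin n) (Fin n) (WittVector p A)) : Matrix (Fin n) (Fin n) A :=
  X.map fun w => w.coeff j

/-- `Σ_{1,t}`: matrices of Witt vectors whose `0`-th Witt coordinate matrix vanishes and whose
`1`-st Witt coordinate matrix is `t`-step nilpotent. -/
def SigmaOneT (p : ℕ) {A : Type*} [CommRing A] {n : ℕ} (t : ℕ) :
    Set (Matrix (Fin n) (Fin n) (WittVector p A)) :=
  {X | wittPi p 0 X = 0 ∧ wittPi p 1 X ^ t = 0}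

/-- A matrix of Witt vectors lies entrywise in `V^d` if the `j`-th Witt coordinates of all its
entries vanish for all `j < d`. -/
def EntrywiseV (p : ℕ) {A : Type*} [Zero A] {n : ℕ} (d : ℕ)
    (X : Matrix (Fin n) (Fin n) (WittVector p A)) : Prop :=
  ∀ j < d, wittPi p j X = 0

namespace WittVector

open Function

variable {p : ℕ} [Fact p.Prime] {R : Type*} [CommRing R]

local notation "𝕎" => WittVector p

theorem verschiebung_mul_verschiebung (x y : 𝕎 R) :
    verschiebung x * verschiebung y = p * verschiebung (x * y) := by
  calc verschiebung x * verschiebung y = verschiebung (x * y * frobenius (p : 𝕎 R)) := by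
        rw [← verschiebung_mul_frobenius, frobenius_verschiebung, map_natCast, mul_assoc]
    _ = p * verschiebung (x * y) := by rw [verschiebung_mul_frobenius, mul_comm]

theorem verschiebung_mem_ker_truncate_succ {x : 𝕎 R} {d : ℕ}
    (hx : x ∈ RingHom.ker (truncate d)) : verschiebung x ∈ RingHom.ker (truncate (d + 1)) := by
  rw [mem_ker_truncate] at hx ⊢
  rintro (_ | i) hi
  · exact verschiebung_coeff_zero x
  · rw [verschiebung_coeff_succ]
    exact hx i (by omega)

theorem mem_ker_truncate_zero (x : 𝕎 R) : x ∈ RingHom.ker (truncate 0) :=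
  (mem_ker_truncate 0 x).2 fun i hi => absurd hi i.not_lt_zero

theorem mem_ker_truncate_of_le {x : 𝕎 R} {a b : ℕ} (hab : a ≤ b)
    (hx : x ∈ RingHom.ker (truncate b)) : x ∈ RingHom.ker (truncate a) := by
  rw [mem_ker_truncate] at hx ⊢
  exact fun i hi => hx i (hi.trans_le hab)

variable [CharP R p]

theorem mul_mem_ker_truncate {x y : 𝕎 R} {a b : ℕ} (hx : x ∈ RingHom.ker (truncate a))
    (hy : y ∈ RingHom.ker (truncate b)) : x * y ∈ RingHom.ker (truncate (a + b)) := by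
  rw [mem_ker_truncate] at hx hy ⊢
  rw [eq_iterate_verschiebung hx, eq_iterate_verschiebung hy, iterate_verschiebung_mul]
  exact fun i hi => iterate_verschiebung_coeff_eq_zero _ hi

theorem coeff_add_mul_of_mem_ker_truncate {x y : 𝕎 R} {a b : ℕ}
    (hx : x ∈ RingHom.ker (truncate a)) (hy : y ∈ RingHom.ker (truncate b)) :
    (x * y).coeff (a + b) = x.coeff a ^ p ^ b * y.coeff b ^ p ^ a := by
  rw [mem_ker_truncate] at hx hy
  have h := iterate_verschiebung_mul_coeff (x.shift a) (y.shift b) a b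
  rwa [← eq_iterate_verschiebung hx, ← eq_iterate_verschiebung hy, shift_coeff, shift_coeff,
    add_zero, add_zero] at h

theorem natCast_pow_mem_ker_truncate (k : ℕ) : (p : 𝕎 R) ^ k ∈ RingHom.ker (truncate k) := by
  rw [mem_ker_truncate]
  intro i hi
  simpa using mul_pow_charP_coeff_zero (1 : 𝕎 R) hi

theorem mem_ker_truncate_of_mul_mem {x z : 𝕎 R} (hx : IsUnit (x.coeff 0)) {k : ℕ}
    (h : x * z ∈ RingHom.ker (truncate k)) : z ∈ RingHom.ker (truncate k) := by
  induction k with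
  | zero => exact mem_ker_truncate_zero z
  | succ k ih =>
    have hz := ih (mem_ker_truncate_of_le k.le_succ h)
    have hlead := coeff_add_mul_of_mem_ker_truncate (mem_ker_truncate_zero x) hz
    rw [mem_ker_truncate] at h hz ⊢
    intro i hi
    rcases Nat.lt_succ_iff_lt_or_eq.1 hi with hi | rfl
    · exact hz i hi
    · rw [zero_add, h i hi, pow_zero, pow_one] at hlead
      exact ((hx.pow _).mul_right_eq_zero).1 hlead.symm

theorem mem_ker_truncate_of_mul_p_pow_mem [IsReduced R] {z : 𝕎 R} {a k : ℕ}
    (h : z * p ^ a ∈ RingHom.ker (truncate (a + k))) : z ∈ RingHom.ker (truncate k) := by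
  rw [mem_ker_truncate] at h ⊢
  intro i hi
  have hi' := h (i + a) (by omega)
  rw [mul_pow_charP_coeff_succ] at hi'
  exact IsNilpotent.eq_zero ⟨_, hi'⟩

theorem mem_ker_truncate_of_nsmul_mem [IsReduced R] {z : 𝕎 R} {N k : ℕ} (hN : N ≠ 0)
    (h : N • z ∈ RingHom.ker (truncate (N.factorization p + k))) :
    z ∈ RingHom.ker (truncate k) := by
  have hp : p.Prime := Fact.out
  have hm : ¬p ∣ ordCompl[p] N := Nat.not_dvd_ordCompl hp hN
  have hNm := Nat.ordProj_mul_ordCompl_eq_self N p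
  generalize ordCompl[p] N = m at hm hNm
  generalize N.factorization p = a at h hNm
  subst hNm
  have h' : (m : 𝕎 R) * z * p ^ a ∈ RingHom.ker (truncate (a + k)) := by
    convert h using 2
    rw [nsmul_eq_mul]; push_cast; ring
  refine mem_ker_truncate_of_mul_mem ?_ (mem_ker_truncate_of_mul_p_pow_mem h')
  rwa [← constantCoeff_apply, map_natCast, CharP.isUnit_natCast_iff hp]

end WittVector

open WittVector

section EntrywiseV

variable {p : ℕ} {A : Type*} [CommRing A] {n : ℕ}

local notation "𝕎" => WittVector p

theorem entrywiseV_zero (M : Matrix (Fin n) (Fin n) (𝕎 A)) : EntrywiseV p 0 M :=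
  fun j hj => absurd hj j.not_lt_zero

theorem entrywiseV_one_iff {M : Matrix (Fin n) (Fin n) (𝕎 A)} :
    EntrywiseV p 1 M ↔ wittPi p 0 M = 0 := by
  simp [EntrywiseV]

theorem EntrywiseV.mono {a b : ℕ} {M : Matrix (Fin n) (Fin n) (𝕎 A)} (hM : EntrywiseV p b M)
    (hab : a ≤ b) : EntrywiseV p a M :=
  fun j hj => hM j (hj.trans_le hab)

variable [Fact p.Prime]

theorem entrywiseV_iff_mem_ker_truncate {d : ℕ} {M : Matrix (Fin n) (Fin n) (𝕎 A)} :
    EntrywiseV p d M ↔ ∀ i j, M i j ∈ RingHom.ker (truncate d) := by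
  simp only [EntrywiseV, wittPi, mem_ker_truncate, ← Matrix.ext_iff, Matrix.map_apply,
    Matrix.zero_apply]
  exact ⟨fun h i j k hk => h k hk i j, fun h k hk i j => h i j k hk⟩

theorem wittPi_zero_pow (M : Matrix (Fin n) (Fin n) (𝕎 A)) (k : ℕ) :
    wittPi p 0 (M ^ k) = wittPi p 0 M ^ k :=
  map_pow (constantCoeff : 𝕎 A →+* A).mapMatrix M k

theorem exists_eq_map_verschiebung {X : Matrix (Fin n) (Fin n) (𝕎 A)} (hX : EntrywiseV p 1 X) :
    ∃ Y : Matrix (Fin n) (Fin n) (𝕎 A),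
      X = Y.map verschiebung ∧ wittPi p 0 Y = wittPi p 1 X := by
  rw [entrywiseV_iff_mem_ker_truncate] at hX
  exact ⟨X.map (shift · 1),
    Matrix.ext fun i j => eq_iterate_verschiebung ((mem_ker_truncate 1 _).1 (hX i j)), rfl⟩

theorem Matrix.map_verschiebung_mul_map_verschiebung (M N : Matrix (Fin n) (Fin n) (𝕎 A)) :
    M.map verschiebung * N.map verschiebung = (p : 𝕎 A) • (M * N).map verschiebung := by
  ext i j : 1
  simp only [Matrix.mul_apply, Matrix.map_apply, Matrix.smul_apply, map_sum, Finset.mul_sum,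
    smul_eq_mul, verschiebung_mul_verschiebung]

theorem Matrix.map_verschiebung_pow_succ (M : Matrix (Fin n) (Fin n) (𝕎 A)) (k : ℕ) :
    M.map verschiebung ^ (k + 1) = (p : 𝕎 A) ^ k • (M ^ (k + 1)).map verschiebung := by
  induction k with
  | zero => simp
  | succ k ih =>
    rw [pow_succ, ih, Matrix.smul_mul, Matrix.map_verschiebung_mul_map_verschiebung, smul_smul,
      ← pow_succ, ← pow_succ]

theorem EntrywiseV.map_verschiebung {d : ℕ} {M : Matrix (Fin n) (Fin n) (𝕎 A)}
    (hM : EntrywiseV p d M) : EntrywiseV p (d + 1) (M.map verschiebung) := by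
  rw [entrywiseV_iff_mem_ker_truncate] at hM ⊢
  exact fun i j => verschiebung_mem_ker_truncate_succ (hM i j)

variable [CharP A p]

theorem EntrywiseV.mul {a b : ℕ} {M N : Matrix (Fin n) (Fin n) (𝕎 A)} (hM : EntrywiseV p a M)
    (hN : EntrywiseV p b N) : EntrywiseV p (a + b) (M * N) := by
  rw [entrywiseV_iff_mem_ker_truncate] at hM hN ⊢
  exact fun i j => Ideal.sum_mem _ fun k _ => mul_mem_ker_truncate (hM i k) (hN k j)

theorem EntrywiseV.pow {a : ℕ} {M : Matrix (Fin n) (Fin n) (𝕎 A)} (hM : EntrywiseV p a M)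
    (k : ℕ) : EntrywiseV p (k * a) (M ^ k) := by
  induction k with
  | zero => rw [zero_mul]; exact entrywiseV_zero _
  | succ k ih => simpa [pow_succ, add_mul] using ih.mul hM

theorem EntrywiseV.natCast_pow_smul {d : ℕ} {M : Matrix (Fin n) (Fin n) (𝕎 A)}
    (hM : EntrywiseV p d M) (k : ℕ) : EntrywiseV p (k + d) ((p : 𝕎 A) ^ k • M) := by
  rw [entrywiseV_iff_mem_ker_truncate] at hM ⊢
  exact fun i j => mul_mem_ker_truncate (natCast_pow_mem_ker_truncate k) (hM i j)

theorem EntrywiseV.pow_of_mul_le {t d v : ℕ} {M : Matrix (Fin n) (Fin n) (𝕎 A)}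
    (hM : EntrywiseV p 1 (M ^ t)) (hvd : t * d ≤ v) : EntrywiseV p d (M ^ v) := by
  have h := (entrywiseV_zero (M ^ (v - t * d))).mul (hM.pow d)
  rwa [← pow_mul, ← pow_add, mul_comm, zero_add, one_mul, Nat.sub_add_cancel hvd] at h

theorem EntrywiseV.of_nsmul [IsReduced A] {N k : ℕ} (hN : N ≠ 0)
    {M : Matrix (Fin n) (Fin n) (𝕎 A)} (hM : EntrywiseV p (N.factorization p + k) (N • M)) :
    EntrywiseV p k M := by
  rw [entrywiseV_iff_mem_ker_truncate] at hM ⊢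
  exact fun i j => mem_ker_truncate_of_nsmul_mem hN (hM i j)

theorem entrywiseV_pow_of_mem_sigmaOneT {t d v : ℕ} {X : Matrix (Fin n) (Fin n) (𝕎 A)}
    (hX : X ∈ SigmaOneT p t) (hvd : t * d ≤ v) (hv : v ≠ 0) :
    EntrywiseV p (v + d) (X ^ v) := by
  obtain ⟨Y, rfl, hY⟩ := exists_eq_map_verschiebung (entrywiseV_one_iff.2 hX.1)
  have hYt : EntrywiseV p 1 (Y ^ t) := by
    rw [entrywiseV_one_iff, wittPi_zero_pow, hY, hX.2]
  obtain ⟨v, rfl⟩ := Nat.exists_eq_succ_of_ne_zero hv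
  rw [Matrix.map_verschiebung_pow_succ]
  convert ((hYt.pow_of_mul_le hvd).map_verschiebung).natCast_pow_smul v using 1
  omega

end EntrywiseV

theorem div_factorial_pow_sigmaOneT_mem_verschiebung_general (p : ℕ) [Fact p.Prime] (A : Type*)
    [CommRing A] [CharP A p] [IsReduced A] (n t : ℕ)
    (X : Matrix (Fin n) (Fin n) (WittVector p A)) (hX : X ∈ SigmaOneT p t)
    (d v : ℕ) (hv : 1 ≤ v) (hvd : t * d ≤ v)
    (Z : Matrix (Fin n) (Fin n) (WittVector p A)) (hZ : v.factorial • Z = X ^ v) :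
    EntrywiseV p (d + 1) Z := by
  have hXv := entrywiseV_pow_of_mem_sigmaOneT hX hvd (by omega)
  rw [← hZ] at hXv
  refine EntrywiseV.of_nsmul v.factorial_ne_zero (hXv.mono ?_)
  have := padicValNat_factorial_lt_of_ne_zero p (n := v) (by omega)
  rw [Nat.factorization_def _ Fact.out]
  omega

/-- If `X ∈ Σ_{1,t}` and `v ≥ t·d` with `v ≥ 1`, then the matrix `Z = X^v / v!` lies entrywise
in `V^{d+1}`. -/
theorem div_factorial_pow_sigmaOneT_mem_verschiebung (p : ℕ) [Fact p.Prime] (A : Type*)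
    [CommRing A] [CharP A p] [IsReduced A] (n t : ℕ) (hn : 1 ≤ n) (ht : 1 ≤ t)
    (X : Matrix (Fin n) (Fin n) (WittVector p A)) (hX : X ∈ SigmaOneT p t)
    (d v : ℕ) (hv : 1 ≤ v) (hvd : t * d ≤ v)
    (Z : Matrix (Fin n) (Fin n) (WittVector p A)) (hZ : v.factorial • Z = X ^ v) :
    EntrywiseV p (d + 1) Z :=
  div_factorial_pow_sigmaOneT_mem_verschiebung_general p A n t X hX d v hv hvd Z hZ
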